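/- arXiv:2601.02909 — 6 statements merged into one kernel-verified Lean document; each statement's English description precedes it below -/
import Mathlib

section
/- Assume N ≥ 3, 0 < b < 2 < q < 2(N-b)/(N-2), δ = (2-b)/(q-2), and 0 ≤ η < b. Then q + (b-η)/δ < q(N-η)/(N-b) < 2*_{b,q,η} := (ηq(N-2)+2N(b-η))/(b(N-2)). Consequently every r ≥ 2*_{b,q,η} satisfies rδ + η - N > qδ + b - N (every admissible pair with η < b is superscaled). -/
/-- For N ≥ 3, 0 ≤ η < b, one has
q + (b-η)/δ < q(N-η)/(N-b) < 2*_{b,q,η}, hence every r ≥ 2*_{b,q,η} is superscaled: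
rδ + η - N > qδ + b - N. -/
theorem stmt_8 (N b q δ η : ℝ)
    (hN : 3 ≤ N) (hb0 : 0 < b) (hb2 : b < 2) (hq2 : 2 < q)
    (hq : q < 2 * (N - b) / (N - 2)) (hδ : δ = (2 - b) / (q - 2))
    (hη0 : 0 ≤ η) (hηb : η < b) :
    q + (b - η) / δ < q * (N - η) / (N - b) ∧
    q * (N - η) / (N - b) < (η * q * (N - 2) + 2 * N * (b - η)) / (b * (N - 2)) ∧
    ∀ r : ℝ, (η * q * (N - 2) + 2 * N * (b - η)) / (b * (N - 2)) ≤ r →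
      r * δ + η - N > q * δ + b - N := by
  have hN2 : (0:ℝ) < N - 2 := by linarith
  have hNb : (0:ℝ) < N - b := by linarith
  have h2b : (0:ℝ) < 2 - b := by linarith
  have hq2' : (0:ℝ) < q - 2 := by linarith
  have hδpos : 0 < δ := by rw [hδ]; positivity
  have key : q * (N - 2) < 2 * (N - b) := by
    rw [lt_div_iff₀ hN2] at hq; linarith
  have h1 : q + (b - η) / δ < q * (N - η) / (N - b) := by
    have e : q * (N - η) / (N - b) - (q + (b - η) / δ)
        = (b - η) * (2 * (N - b) - q * (N - 2)) / ((2 - b) * (N - b)) := by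
      rw [hδ]; field_simp; ring
    have : 0 < (b - η) * (2 * (N - b) - q * (N - 2)) / ((2 - b) * (N - b)) := by
      apply div_pos (by nlinarith) (by positivity)
    linarith
  have h2 : q * (N - η) / (N - b) <
      (η * q * (N - 2) + 2 * N * (b - η)) / (b * (N - 2)) := by
    have e : (η * q * (N - 2) + 2 * N * (b - η)) / (b * (N - 2)) - q * (N - η) / (N - b)
        = N * (b - η) * (2 * (N - b) - q * (N - 2)) / (b * (N - 2) * (N - b)) := by
      field_simp; ring
    have : 0 < N * (b - η) * (2 * (N - b) - q * (N - 2)) / (b * (N - 2) * (N - b)) := by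
      apply div_pos (mul_pos (mul_pos (by linarith) (by linarith)) (by linarith)) (by positivity)
    linarith
  refine ⟨h1, h2, fun r hr => ?_⟩
  have hr' : q + (b - η) / δ < r := by linarith
  have : (b - η) / δ < r - q := by linarith
  rw [div_lt_iff₀ hδpos] at this
  nlinarith
end

section
/- Assume N ≥ 3, 0 < b < 2 < q < 2(N-b)/(N-2), δ = (2-b)/(q-2), and 2 ≤ η < N. Then q + (b-η)/δ ≥ 2(N-η)/(N-2). Consequently no superscaled admissible pair (η, r) with r < 2(N-η)/(N-2) exists when η ≥ 2. -/
/-- For N ≥ 3 and 2 ≤ η < N one has q + (b-η)/δ ≥ 2(N-η)/(N-2);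
consequently there is no superscaled r with r < 2(N-η)/(N-2). -/
theorem stmt_9 (N b q δ η : ℝ)
    (hN : 3 ≤ N) (hb0 : 0 < b) (hb2 : b < 2) (hq2 : 2 < q)
    (hq : q < 2 * (N - b) / (N - 2)) (hδ : δ = (2 - b) / (q - 2))
    (hη2 : 2 ≤ η) (hηN : η < N) :
    q + (b - η) / δ ≥ 2 * (N - η) / (N - 2) ∧
    ¬ ∃ r : ℝ, r < 2 * (N - η) / (N - 2) ∧ q + (b - η) / δ < r := by
  have h2b : (0:ℝ) < 2 - b := by linarith
  have hq2' : (0:ℝ) < q - 2 := by linarith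
  have hN2 : (0:ℝ) < N - 2 := by linarith
  have hq' : q * (N - 2) < 2 * (N - b) := by
    rwa [lt_div_iff₀ hN2] at hq
  have hδ0 : 0 < δ := by rw [hδ]; positivity
  have e : q + (b - η) / δ = (q * (2 - b) + (b - η) * (q - 2)) / (2 - b) := by
    rw [hδ]; field_simp
  have hmain : q + (b - η) / δ ≥ 2 * (N - η) / (N - 2) := by
    rw [ge_iff_le, e, div_le_div_iff₀ hN2 h2b]
    nlinarith [mul_nonneg (sub_nonneg.mpr hη2) (sub_nonneg.mpr (le_of_lt (by nlinarith [hq'] : q * (N - 2) - 2 * (N - 2) < 2 * (2 - b))))]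
  exact ⟨hmain, fun ⟨r, h1, h2⟩ => absurd (lt_trans h2 h1) (not_lt.mpr hmain)⟩
end

section
/- Let N ≥ 3, 0 < b < 2 < q < 2(N-b)/(N-2), 2 < p < q, δ = (2-b)/(q-2), a = b + δ(q-p). Then 2*_{b,q,a} := q(N-a)/(N-b) < p < 2(N-a)/(N-2). (For N = 2, the inequality q(N-a)/(N-b) < p still holds.) -/
/-- Under (H) with N ≥ 3, the pair (a,p) satisfies
q(N-a)/(N-b) < p < 2(N-a)/(N-2). -/
theorem stmt_10 (N b q p δ a : ℝ)
    (hN : 3 ≤ N) (hb0 : 0 < b) (hb2 : b < 2) (hp2 : 2 < p) (hpq : p < q)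
    (hq : q < 2 * (N - b) / (N - 2))
    (hδ : δ = (2 - b) / (q - 2)) (ha : a = b + δ * (q - p)) :
    q * (N - a) / (N - b) < p ∧ p < 2 * (N - a) / (N - 2) := by
  have hq2 : (2:ℝ) < q := hp2.trans hpq
  have hN2 : (0:ℝ) < N - 2 := by linarith
  have hNb : (0:ℝ) < N - b := by linarith
  have hq' : q * (N - 2) < 2 * (N - b) := by
    rw [lt_div_iff₀ hN2] at hq; linarith
  have hδδ : δ * (q - 2) = 2 - b := by
    rw [hδ]; exact div_mul_cancel₀ _ (by linarith : q - 2 ≠ 0)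
  subst ha
  constructor
  · rw [div_lt_iff₀ hNb]
    have h1 : N - b < q * δ := by nlinarith
    nlinarith [mul_lt_mul_of_pos_left h1 (sub_pos.2 hpq)]
  · rw [lt_div_iff₀ hN2]
    nlinarith [mul_pos (sub_pos.2 hp2) (by linarith : (0:ℝ) < 2 * (N - b) - q * (N - 2)), hδδ, mul_pos (sub_pos.2 hpq) (by linarith : (0:ℝ) < q - 2)]
end

section
/- Assume N ≥ 2, 0 < b < 2 < p < q < 2(N-b)/(N-2), δ = (2-b)/(q-2), a = b + δ(q-p). Let (η, r) be an admissible pair with η > a (and r in the admissible range). Then there exist η̃ ∈ (b, a) and θ ∈ (0,1) and r̃ > 1 such that 1/p = θ/r + (1-θ)/r̃ and a/p = θη/r + (1-θ)η̃/r̃; moreover sign(ℓ(η̃,r̃) - ℓ) = -sign(ℓ(η,r) - ℓ), where ℓ(η,r) = rδ + η - N and ℓ = ℓ(a,p). -/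
/-- Interpolation parameters (Lemma on general interpolation),
case η > a: there exist η̃ ∈ (b,a), θ ∈ (0,1) and r̃ > 1 satisfying the two
balance relations, with sign(ℓ(η̃,r̃) - ℓ) = -sign(ℓ(η,r) - ℓ). -/
theorem stmt_15 (N b q p δ a η r : ℝ)
    (hN : 2 ≤ N) (hb0 : 0 < b) (hb2 : b < 2) (hp2 : 2 < p) (hpq : p < q)
    (hq : 3 ≤ N → q < 2 * (N - b) / (N - 2))
    (hδ : δ = (2 - b) / (q - 2)) (ha : a = b + δ * (q - p))
    (hηa : a < η) (hηadm : η < (N + 2) / 2) (hr1 : 1 < r)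
    (hrlow : q * (N - η) / (N - b) < r)
    (hrhigh : 3 ≤ N → r < 2 * (N - η) / (N - 2)) :
    ∃ η' θ r' : ℝ, b < η' ∧ η' < a ∧ 0 < θ ∧ θ < 1 ∧ 1 < r' ∧
      1 / p = θ / r + (1 - θ) / r' ∧
      a / p = θ * η / r + (1 - θ) * η' / r' ∧
      Real.sign (r' * δ + η' - N - (p * δ + a - N))
        = - Real.sign (r * δ + η - N - (p * δ + a - N)) := by
  have hq2 : 2 < q := lt_trans hp2 hpq
  have hδ0 : 0 < δ := by
    rw [hδ]; exact div_pos (by linarith) (by linarith)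
  have hab : b < a := by
    have h : 0 < δ * (q - p) := mul_pos hδ0 (by linarith)
    linarith
  have hr0 : 0 < r := by linarith
  have hp0 : 0 < p := by linarith
  have hηa0 : 0 < η - a := by linarith
  set ε : ℝ := min ((a - b) / 2) ((p - 1) * (η - a) / (2 * r)) with hεdef
  have hε0 : 0 < ε := by
    apply lt_min
    · linarith
    · exact div_pos (mul_pos (by linarith) hηa0) (by linarith)
  have hε1 : ε < a - b := by
    have := min_le_left ((a - b) / 2) ((p - 1) * (η - a) / (2 * r))
    rw [← hεdef] at this; linarith
  have hε2 : r * ε < (p - 1) * (η - a) := by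
    have h := min_le_right ((a - b) / 2) ((p - 1) * (η - a) / (2 * r))
    rw [← hεdef] at h
    have h2 : r * ε ≤ r * ((p - 1) * (η - a) / (2 * r)) :=
      mul_le_mul_of_nonneg_left h (le_of_lt hr0)
    have h3 : r * ((p - 1) * (η - a) / (2 * r)) = (p - 1) * (η - a) / 2 := by
      field_simp
    have h4 : (p - 1) * (η - a) / 2 < (p - 1) * (η - a) := by
      have : 0 < (p - 1) * (η - a) := mul_pos (by linarith) hηa0
      linarith
    linarith
  have hden : 0 < η - a + ε := by linarith
  refine ⟨a - ε, r * ε / (p * (η - a + ε)), (p * (η - a + ε) - r * ε) / (η - a),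
    by linarith, by linarith, ?_, ?_, ?_, ?_, ?_, ?_⟩
  · exact div_pos (mul_pos hr0 hε0) (mul_pos hp0 hden)
  · rw [div_lt_one (mul_pos hp0 hden)]
    nlinarith [mul_pos hp0 hε0]
  · rw [lt_div_iff₀ hηa0]
    nlinarith [mul_pos hp0 hε0]
  · have hnum : p * (η - a + ε) - r * ε > 0 := by nlinarith [mul_pos hp0 hε0]
    field_simp
    ring
  · have hnum : p * (η - a + ε) - r * ε > 0 := by nlinarith [mul_pos hp0 hε0]
    field_simp
    ring
  · have key : (p * (η - a + ε) - r * ε) / (η - a) * δ + (a - ε) - N - (p * δ + a - N)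
        = (-ε / (η - a)) * (r * δ + η - N - (p * δ + a - N)) := by
      field_simp
      ring
    rw [key]
    have hc : -ε / (η - a) < 0 := div_neg_of_neg_of_pos (by linarith) hηa0
    rcases lt_trichotomy (r * δ + η - N - (p * δ + a - N)) 0 with hD | hD | hD
    · rw [Real.sign_of_neg hD, Real.sign_of_pos (mul_pos_of_neg_of_neg hc hD)]
      norm_num
    · rw [hD, mul_zero, Real.sign_zero]; norm_num
    · rw [Real.sign_of_pos hD, Real.sign_of_neg (mul_neg_of_neg_of_pos hc hD)]
end

section
/- Let N ≥ 3, 0 < b < 2 < q < 2(N-b)/(N-2), 0 ≤ η < b, δ = (2-b)/(q-2). Define 2^rad_{b,q,η} := (q(2N-2-η) + 2(b-η))/(2N-2-b) and 2*_{b,q,η} := (ηq(N-2)+2N(b-η))/(b(N-2)). Then q(N-η)/(N-b) < 2^rad_{b,q,η} < 2*_{b,q,η}. -/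
/-- The radial threshold improves on the nonradial one:
q(N-η)/(N-b) < 2^rad_{b,q,η} < 2*_{b,q,η} for 0 ≤ η < b, N ≥ 3. -/
theorem stmt_18 (N b q η : ℝ)
    (hN : 3 ≤ N) (hb0 : 0 < b) (hb2 : b < 2) (hq2 : 2 < q)
    (hq : q < 2 * (N - b) / (N - 2)) (hη0 : 0 ≤ η) (hηb : η < b) :
    q * (N - η) / (N - b) < (q * (2 * N - 2 - η) + 2 * (b - η)) / (2 * N - 2 - b) ∧
    (q * (2 * N - 2 - η) + 2 * (b - η)) / (2 * N - 2 - b)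
      < (η * q * (N - 2) + 2 * N * (b - η)) / (b * (N - 2)) := by
  have hN2 : (0:ℝ) < N - 2 := by linarith
  have hNb : (0:ℝ) < N - b := by linarith
  have h2Nb : (0:ℝ) < 2 * N - 2 - b := by linarith
  have hbN2 : (0:ℝ) < b * (N - 2) := by positivity
  have hq' : q * (N - 2) < 2 * (N - b) := by
    rw [lt_div_iff₀ hN2] at hq; linarith
  constructor
  · rw [div_lt_div_iff₀ hNb h2Nb]
    nlinarith [mul_pos (sub_pos.mpr hηb) (sub_pos.mpr hq2), hq', sub_pos.mpr hηb]
  · rw [div_lt_div_iff₀ h2Nb hbN2]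
    nlinarith [mul_pos (sub_pos.mpr hηb) hN2, mul_pos (sub_pos.mpr hηb) (sub_pos.mpr hq2),
      mul_nonneg hη0 (le_of_lt (sub_pos.mpr hq2)), hq', mul_pos hb0 (sub_pos.mpr hq2),
      mul_lt_mul_of_pos_left hq' hb0, mul_nonneg hη0 hN2.le]
end

section
/- Let N ≥ 2, 0 < b < N, q > 2, δ = (2-b)/(q-2) assumed positive (b < 2), 0 ≤ η < b, and θ ∈ (0,1). Define r by 1/r = θ(N-2)/(2(N-η)) + (1-θ)(N-b)/(q(N-η)) and set σ := -η/(rθ) + (1-θ)b/(qθ). Then σ ≤ N-1 if and only if θ ≥ θ₂ := 2(b-η)/(2(b-η) + q(2N-2-η)), and substituting θ = θ₂ into the balance relation yields r = (q(2N-2-η)+2(b-η))/(2N-2-b). -/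
/-- Radial CKN parameter computation: with
1/r = θ(N-2)/(2(N-η)) + (1-θ)(N-b)/(q(N-η)) and σ = -η/(rθ) + (1-θ)b/(qθ),
one has σ ≤ N-1 ⟺ θ ≥ θ₂ := 2(b-η)/(2(b-η)+q(2N-2-η)), and θ = θ₂ gives
r = (q(2N-2-η)+2(b-η))/(2N-2-b). -/
theorem stmt_19 (N b q η θ r σ : ℝ)
    (hN : 2 ≤ N) (hη0 : 0 ≤ η) (hηb : η < b) (hb2 : b < 2) (hq2 : 2 < q)
    (hθ0 : 0 < θ) (hθ1 : θ < 1)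
    (hr : 1 / r = θ * (N - 2) / (2 * (N - η)) + (1 - θ) * (N - b) / (q * (N - η)))
    (hσ : σ = -η / (r * θ) + (1 - θ) * b / (q * θ)) :
    (σ ≤ N - 1 ↔ 2 * (b - η) / (2 * (b - η) + q * (2 * N - 2 - η)) ≤ θ) ∧
    (θ = 2 * (b - η) / (2 * (b - η) + q * (2 * N - 2 - η)) →
      r = (q * (2 * N - 2 - η) + 2 * (b - η)) / (2 * N - 2 - b)) := by
  have hNη : 0 < N - η := by linarith
  have hNb : 0 < N - b := by linarith
  have hq0 : 0 < q := by linarith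
  have hqne : q ≠ 0 := ne_of_gt hq0
  have hθne : θ ≠ 0 := ne_of_gt hθ0
  have hK : 0 < 2 * (b - η) + q * (2 * N - 2 - η) := by nlinarith
  have hinvpos : 0 < 1 / r := by
    rw [hr]
    have h1 : 0 ≤ θ * (N - 2) / (2 * (N - η)) :=
      div_nonneg (by nlinarith) (by linarith)
    have h2 : 0 < (1 - θ) * (N - b) / (q * (N - η)) :=
      div_pos (by nlinarith) (by positivity)
    linarith
  have hr0 : 0 < r := one_div_pos.mp hinvpos
  have hrne : r ≠ 0 := ne_of_gt hr0
  have hX : 0 < θ * (2 * q * (N - η)) := by positivity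
  have h1 : σ * θ = -η * (1 / r) + (1 - θ) * b / q := by
    rw [hσ]; field_simp
  have hσθ : σ * (θ * (2 * q * (N - η))) =
      -η * (q * θ * (N - 2) + 2 * (1 - θ) * (N - b)) + 2 * (N - η) * (1 - θ) * b := by
    have : σ * (θ * (2 * q * (N - η))) = (σ * θ) * (2 * q * (N - η)) := by ring
    rw [this, h1, hr]
    field_simp
  constructor
  · constructor
    · intro h
      have h2 : σ * (θ * (2 * q * (N - η))) ≤ (N - 1) * (θ * (2 * q * (N - η))) :=
        mul_le_mul_of_nonneg_right h (le_of_lt hX)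
      rw [hσθ] at h2
      rw [div_le_iff₀ hK]
      nlinarith [h2]
    · intro h
      rw [div_le_iff₀ hK] at h
      rw [← mul_le_mul_iff_of_pos_right hX, hσθ]
      nlinarith [h]
  · intro hθ
    have hden : (0:ℝ) < 2 * N - 2 - b := by linarith
    have hKne : 2 * (b - η) + q * (2 * N - 2 - η) ≠ 0 := ne_of_gt hK
    have hinvK : (1 / r) * (2 * q * (N - η)) = q * θ * (N - 2) + 2 * (1 - θ) * (N - b) := by
      rw [hr]; field_simp
    have hinv2 : 1 / r = (2 * N - 2 - b) / (q * (2 * N - 2 - η) + 2 * (b - η)) := by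
      have h2 : (1 / r) * (2 * q * (N - η)) =
          (2 * N - 2 - b) / (q * (2 * N - 2 - η) + 2 * (b - η)) * (2 * q * (N - η)) := by
        rw [hinvK, hθ]
        rw [div_mul_eq_mul_div, eq_div_iff (by linarith : q * (2 * N - 2 - η) + 2 * (b - η) ≠ 0)]
        have ht : 2 * (b - η) / (2 * (b - η) + q * (2 * N - 2 - η)) * (2 * (b - η) + q * (2 * N - 2 - η)) = 2 * (b - η) := div_mul_cancel₀ _ hKne
        linear_combination (q * (N - 2) - 2 * (N - b)) * ht
      exact mul_right_cancel₀ (by positivity) h2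
    calc r = 1 / (1 / r) := (one_div_one_div r).symm
      _ = (q * (2 * N - 2 - η) + 2 * (b - η)) / (2 * N - 2 - b) := by
          rw [hinv2, one_div_div]
end
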